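/- Assume in addition that ξ×H ≠ 0 (so (H·ξ)² − |H|²|ξ|² ≠ 0). Then π₁(ξ) = Id₃ + ((H·ξ)² − |H|²|ξ|²)⁻¹·w²(ξ) is a symmetric idempotent 3×3 matrix of trace 1 (π₁ᵀ = π₁, π₁² = π₁, tr π₁ = 1); indeed π₁(ξ) is the orthogonal projection of ℝ³ onto the line spanned by ξ×H. -/

import Mathlib

/-!
By Lagrange's identity the denominator (H·ξ)² − |H|²|ξ|² equals −|ξ×H|², and a direct
computation gives w²(ξ) = |ξ×H|²·Id₃ − (ξ×H)⊗(ξ×H). Hence π₁(ξ) = |ξ×H|⁻²·(ξ×H)⊗(ξ×H), the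
orthogonal projection onto the line through ξ×H, which is symmetric, idempotent and of trace 1.
-/

open Matrix

noncomputable section

/-- Euclidean dot product on `ℝ³`. -/
def dot3 (a b : Fin 3 → ℝ) : ℝ := a 0 * b 0 + a 1 * b 1 + a 2 * b 2

/-- Cross product on `ℝ³`. -/
def cross3 (a b : Fin 3 → ℝ) : Fin 3 → ℝ :=
  ![a 1 * b 2 - a 2 * b 1, a 2 * b 0 - a 0 * b 2, a 0 * b 1 - a 1 * b 0]

/-- `w²(ξ) = |H|²·(ξ⊗ξ) + |ξ|²·(H⊗H) − (H·ξ)·(H⊗ξ + ξ⊗H)`. -/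
def w2 (H ξ : Fin 3 → ℝ) : Matrix (Fin 3) (Fin 3) ℝ :=
  (dot3 H H) • vecMulVec ξ ξ + (dot3 ξ ξ) • vecMulVec H H
    - (dot3 H ξ) • (vecMulVec H ξ + vecMulVec ξ H)

/-- `π₁(ξ) = Id₃ + ((H·ξ)² − |H|²|ξ|²)⁻¹·w²(ξ)`. -/
def pi1 (H ξ : Fin 3 → ℝ) : Matrix (Fin 3) (Fin 3) ℝ :=
  (1 : Matrix (Fin 3) (Fin 3) ℝ)
    + ((dot3 H ξ) ^ 2 - dot3 H H * dot3 ξ ξ)⁻¹ • w2 H ξ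

section LineProjection

variable {K n : Type*} [Field K] [Fintype n]

def lineProjection (v : n → K) : Matrix n n K :=
  (v ⬝ᵥ v)⁻¹ • vecMulVec v v

theorem transpose_lineProjection (v : n → K) : (lineProjection v)ᵀ = lineProjection v := by
  rw [lineProjection, transpose_smul, transpose_vecMulVec]

theorem lineProjection_mul_self {v : n → K} (hv : v ⬝ᵥ v ≠ 0) :
    lineProjection v * lineProjection v = lineProjection v := by
  rw [lineProjection, smul_mul_smul_comm, vecMulVec_mul_vecMulVec, vecMulVec_smul, smul_smul,
    mul_assoc, inv_mul_cancel₀ hv, mul_one]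

theorem trace_lineProjection {v : n → K} (hv : v ⬝ᵥ v ≠ 0) : (lineProjection v).trace = 1 := by
  rw [lineProjection, trace_smul, trace_vecMulVec, smul_eq_mul, inv_mul_cancel₀ hv]

end LineProjection

theorem dot3_eq_dotProduct (a b : Fin 3 → ℝ) : dot3 a b = a ⬝ᵥ b := by
  simp [dot3, dotProduct, Fin.sum_univ_three]

theorem cross3_eq_crossProduct (a b : Fin 3 → ℝ) : cross3 a b = a ⨯₃ b := rfl

theorem sq_dot3_sub_dot3_mul_dot3 (H ξ : Fin 3 → ℝ) :
    dot3 H ξ ^ 2 - dot3 H H * dot3 ξ ξ = -dot3 (cross3 ξ H) (cross3 ξ H) := by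
  simp only [dot3_eq_dotProduct, cross3_eq_crossProduct, cross_dot_cross, dotProduct_comm ξ H]
  ring

theorem w2_eq_smul_one_sub_vecMulVec_cross3 (H ξ : Fin 3 → ℝ) :
    w2 H ξ = dot3 (cross3 ξ H) (cross3 ξ H) • 1 - vecMulVec (cross3 ξ H) (cross3 ξ H) := by
  ext i j
  fin_cases i <;> fin_cases j <;>
    simp [w2, dot3, cross3, one_apply, vecMulVec_apply] <;> ring

theorem dot3_cross3_self_ne_zero {ξ H : Fin 3 → ℝ} (hcross : cross3 ξ H ≠ 0) :
    dot3 (cross3 ξ H) (cross3 ξ H) ≠ 0 := by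
  rwa [dot3_eq_dotProduct, Ne, dotProduct_self_eq_zero]

theorem pi1_eq_lineProjection {H ξ : Fin 3 → ℝ} (hcross : cross3 ξ H ≠ 0) :
    pi1 H ξ = lineProjection (cross3 ξ H) := by
  rw [pi1, sq_dot3_sub_dot3_mul_dot3, w2_eq_smul_one_sub_vecMulVec_cross3, lineProjection,
    ← dot3_eq_dotProduct, inv_neg, neg_smul, smul_sub, smul_smul,
    inv_mul_cancel₀ (dot3_cross3_self_ne_zero hcross), one_smul]
  abel

theorem stmt5_general (H ξ : Fin 3 → ℝ) (hcross : cross3 ξ H ≠ 0) :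
    ((dot3 H ξ) ^ 2 - dot3 H H * dot3 ξ ξ ≠ 0) ∧
    (pi1 H ξ)ᵀ = pi1 H ξ ∧
    pi1 H ξ * pi1 H ξ = pi1 H ξ ∧
    (pi1 H ξ).trace = 1 ∧
    pi1 H ξ = (dot3 (cross3 ξ H) (cross3 ξ H))⁻¹ •
        vecMulVec (cross3 ξ H) (cross3 ξ H) := by
  have hdot3 := dot3_cross3_self_ne_zero hcross
  have hdot : cross3 ξ H ⬝ᵥ cross3 ξ H ≠ 0 := by rwa [← dot3_eq_dotProduct]
  have hpi := pi1_eq_lineProjection hcross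
  refine ⟨?_, ?_, ?_, ?_, ?_⟩
  · rw [sq_dot3_sub_dot3_mul_dot3]
    exact neg_ne_zero.mpr hdot3
  · rw [hpi, transpose_lineProjection]
  · rw [hpi, lineProjection_mul_self hdot]
  · rw [hpi, trace_lineProjection hdot]
  · rw [hpi, lineProjection, dot3_eq_dotProduct]

/-- If `ξ×H ≠ 0` (so `(H·ξ)² − |H|²|ξ|² ≠ 0`), then `π₁(ξ)` is a symmetric
idempotent of trace `1`; indeed it is the orthogonal projection of `ℝ³` onto the
line spanned by `ξ×H`. -/
theorem stmt5 (ρ γ p : ℝ) (H ξ : Fin 3 → ℝ)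
    (hρ : 0 < ρ) (hγp : 0 < γ * p) (hcross : cross3 ξ H ≠ 0) :
    ((dot3 H ξ) ^ 2 - dot3 H H * dot3 ξ ξ ≠ 0) ∧
    (pi1 H ξ)ᵀ = pi1 H ξ ∧
    pi1 H ξ * pi1 H ξ = pi1 H ξ ∧
    (pi1 H ξ).trace = 1 ∧
    pi1 H ξ = (dot3 (cross3 ξ H) (cross3 ξ H))⁻¹ •
        vecMulVec (cross3 ξ H) (cross3 ξ H) :=
  stmt5_general H ξ hcross
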